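/- Let R be an allowed regular local k-algebra of dimension n with regular system of parameters x_1, …, x_n and derivations ∂_{x_1}, …, ∂_{x_n} ∈ T_{R/k} satisfying ∂_{x_i}(x_j) = δ_{ij}. If P ∈ D^m_{R/k} and P(X^α) = 0 for every monomial X^α = x_1^{α_1}⋯x_n^{α_n} with |α| = α_1 + ⋯ + α_n ≤ m, then P = 0. -/

import Mathlib

/-!
Induct on `m`. If `P` kills the monomials of degree `≤ m + 1`, each commutator `[P, x j] ∈ D^m`
kills those of degree `≤ m`, hence vanishes by induction, so `P` commutes with every `x j`.
An operator of finite order commuting with all `x j` is multiplication by `P 1`: inductively all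
its commutators `[P, a]` are multiplication operators, which makes `P - P 1` a derivation, and
this derivation vanishes on the `x j`. Since `d ↦ (d (x j))_j` maps the `∂_{x_i}` to the standard
basis of `Rⁿ`, it is a surjection between free modules of rank `n`, hence injective. So
`P = P 1 = 0`.
-/

open IsLocalRing

universe u v

/-- The filtration `D^m_{R/k} ⊆ End_k(R)` of differential operators: `D^0` consists of the
multiplication operators by elements of `R`, and
`D^{m+1} = {P ∈ End_k(R) : [P, a] ∈ D^m for all a ∈ R}`. -/
def diffOp (k : Type u) (R : Type v) [CommRing k] [CommRing R] [Algebra k R] :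
    ℕ → Set (Module.End k R)
  | 0 => Set.range (Algebra.lmul k R)
  | m + 1 => {P | ∀ r : R, P * Algebra.lmul k R r - Algebra.lmul k R r * P ∈ diffOp k R m}

section Monomial

variable {ι : Type*} {R : Type*} [CommMonoid R] [Fintype ι] [DecidableEq ι]

theorem prod_pow_add_single (x : ι → R) (α : ι → ℕ) (j : ι) :
    ∏ i, x i ^ (α + Pi.single j 1 : ι → ℕ) i = x j * ∏ i, x i ^ α i := by
  simp only [Pi.add_apply, pow_add, Finset.prod_mul_distrib]
  simp [Pi.single_apply, pow_ite, mul_comm]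

theorem sum_add_single (α : ι → ℕ) (j : ι) :
    ∑ i, (α + Pi.single j 1 : ι → ℕ) i = ∑ i, α i + 1 := by
  simp [Finset.sum_add_distrib]

end Monomial

namespace Derivation

variable {R ι : Type*} [CommRing R]

def applyFamily (k : Type*) [CommRing k] [Algebra k R] (x : ι → R) :
    Derivation k R R →ₗ[R] ι → R where
  toFun d j := d (x j)
  map_add' _ _ := rfl
  map_smul' _ _ := rfl

variable {k : Type*} [CommRing k] [Algebra k R] [Fintype ι] [DecidableEq ι] {x : ι → R}
  {D : ι → Derivation k R R}

theorem applyFamily_surjective (hD : ∀ i j, D i (x j) = if i = j then 1 else 0) :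
    Function.Surjective (applyFamily k x) := by
  intro c
  refine ⟨∑ i, c i • D i, funext fun j => ?_⟩
  simp [applyFamily, hD]

theorem applyFamily_injective (hD : ∀ i j, D i (x j) = if i = j then 1 else 0)
    (b : Module.Basis ι R (Derivation k R R)) : Function.Injective (applyFamily k x) :=
  OrzechProperty.injective_of_surjective_of_injective b.equivFun.toLinearMap _
    b.equivFun.injective (applyFamily_surjective hD)

end Derivation

section DiffOp

variable {k R : Type*} [CommRing k] [CommRing R] [Algebra k R]

theorem exists_derivation_of_mem_diffOp_one {P : Module.End k R} (hP : P ∈ diffOp k R 1) :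
    ∃ d : Derivation k R R, P = Algebra.lmul k R (P 1) + d := by
  have leibniz (a b : R) : P (a * b) = a * P b + (P a - a * P 1) * b := by
    obtain ⟨c, hc⟩ := hP a
    have hc1 := congrArg (· 1) hc
    have hcb := congrArg (· b) hc
    simp only [Algebra.coe_lmul_eq_mul, LinearMap.mul_apply_apply, mul_one, LinearMap.sub_apply,
      Module.End.mul_apply] at hc1 hcb
    linear_combination b * hc1 - hcb
  refine ⟨Derivation.mk' (P - Algebra.lmul k R (P 1)) fun a b => ?_, ?_⟩
  · simp only [Algebra.coe_lmul_eq_mul, LinearMap.sub_apply, LinearMap.mul_apply_apply,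
      smul_eq_mul]
    linear_combination leibniz a b
  · ext; simp

theorem eq_lmul_of_mem_diffOp_of_commute {ι : Type*} {x : ι → R}
    (hx : Function.Injective (Derivation.applyFamily k x)) :
    ∀ {m : ℕ} {P : Module.End k R}, P ∈ diffOp k R m →
      (∀ j, Commute P (Algebra.lmul k R (x j))) → P = Algebra.lmul k R (P 1)
  | 0, _, ⟨r, rfl⟩, _ => by simp
  | m + 1, P, hP, hcomm => by
    have hP1 : P ∈ diffOp k R 1 := fun a => by
      have hL (j) : Commute (Algebra.lmul k R a) (Algebra.lmul k R (x j)) :=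
        (Commute.all a (x j)).map _
      exact ⟨_, (eq_lmul_of_mem_diffOp_of_commute hx (hP a) fun j =>
        ((hcomm j).mul_left (hL j)).sub_left ((hL j).mul_left (hcomm j))).symm⟩
    obtain ⟨d, hd⟩ := exists_derivation_of_mem_diffOp_one hP1
    have hd0 : d = 0 := hx <| funext fun j => by
      have h1 := congrArg (· 1) (hcomm j).eq
      have h2 := congrArg (· (x j)) hd
      simp only [Algebra.coe_lmul_eq_mul, Module.End.mul_apply, LinearMap.mul_apply_apply, mul_one,
        LinearMap.add_apply, Derivation.coeFn_coe] at h1 h2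
      show d (x j) = 0
      linear_combination h1 - h2
    calc P = Algebra.lmul k R (P 1) + d := hd
      _ = Algebra.lmul k R (P 1) := by simp [hd0]

theorem commutator_lmul_apply_monomial_eq_zero {ι : Type*} [Fintype ι] [DecidableEq ι]
    {x : ι → R} {m : ℕ} {P : Module.End k R}
    (hkill : ∀ α : ι → ℕ, ∑ i, α i ≤ m + 1 → P (∏ i, x i ^ α i) = 0) (j : ι) (α : ι → ℕ)
    (hα : ∑ i, α i ≤ m) :
    (P * Algebra.lmul k R (x j) - Algebra.lmul k R (x j) * P) (∏ i, x i ^ α i) = 0 := by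
  have hshift := hkill (α + Pi.single j 1) (by rw [sum_add_single]; omega)
  rw [prod_pow_add_single] at hshift
  simp [hshift, hkill α (by omega)]

end DiffOp

theorem diffOp_eq_zero_of_kills_monomials
    (k : Type u) (R : Type v) [Field k] [CommRing R] [Algebra k R]
    (n : ℕ)
    (x : Fin n → R)
    (D : Fin n → Derivation k R R)
    (hD : ∀ i j, D i (x j) = if i = j then 1 else 0)
    (hbasis : Nonempty (Module.Basis (Fin n) R (Derivation k R R)))
    (m : ℕ) (P : Module.End k R) (hP : P ∈ diffOp k R m)
    (hkill : ∀ α : Fin n → ℕ, (∑ i, α i) ≤ m → P (∏ i, x i ^ α i) = 0) :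
    P = 0 := by
  obtain ⟨b⟩ := hbasis
  induction m generalizing P with
  | zero =>
    obtain ⟨r, rfl⟩ := hP
    have hr : r = 0 := by simpa using hkill 0 (by simp)
    rw [hr, map_zero]
  | succ m ih =>
    have hcomm (j : Fin n) : Commute P (Algebra.lmul k R (x j)) :=
      sub_eq_zero.mp (ih _ (hP (x j)) (commutator_lmul_apply_monomial_eq_zero hkill j))
    have hP1 : P 1 = 0 := by simpa using hkill 0 (by simp)
    have hx := Derivation.applyFamily_injective hD b
    rw [eq_lmul_of_mem_diffOp_of_commute hx hP hcomm, hP1, map_zero]
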